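/- For all n ≥ 0, st(16n+7) ≡ st(16n+8) (mod 2) and st(16n+8) ≡ st(16n+4) (mod 2). -/
import Mathlib


def st : ℕ → ℕ
  | 0 => 0
  | 1 => 1
  | n + 2 => if (n + 2) % 2 = 0 then st ((n + 2) / 2) else st (n + 1) + st n + st (n - 1)
decreasing_by all_goals omega

lemma st_even (n : ℕ) : st (2 * n) = st n := by
  match n with
  | 0 => rfl
  | 1 => show st (0 + 2) = st 1; rw [st, st]; norm_num [st]
  | m + 2 =>
    rw [show 2 * (m + 2) = (2 * m + 2) + 2 by ring, st,
      if_pos (by omega), show (2 * m + 2 + 2) / 2 = m + 2 by omega]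

lemma st_odd (n : ℕ) : st (2 * n + 1) % 2 = (st n + 1) % 2 := by
  induction n using Nat.strong_induction_on with
  | _ n ih =>
    match n with
    | 0 => show st 1 % 2 = _; rw [st, st]
    | m + 1 =>
      rw [show 2 * (m + 1) + 1 = (2 * m + 1) + 2 by ring, st]
      have h1 : (2 * m + 1 + 2) % 2 = 1 := by omega
      rw [if_neg (by omega)]
      have h2 : st (2 * m + 1 + 1) = st (m + 1) := by
        rw [show 2 * m + 1 + 1 = 2 * (m + 1) by ring, st_even]
      have h3 : st (2 * m + 1 - 1) = st m := by
        rw [show 2 * m + 1 - 1 = 2 * m by omega, st_even]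
      have h4 := ih m (by omega)
      rw [h2, h3]
      omega

theorem st_cong (n : ℕ) :
    st (16 * n + 7) ≡ st (16 * n + 8) [MOD 2] ∧ st (16 * n + 8) ≡ st (16 * n + 4) [MOD 2] := by
  have h7 : st (16 * n + 7) % 2 = (st n + 3) % 2 := by
    rw [show 16 * n + 7 = 2 * (8 * n + 3) + 1 by ring, st_odd]
    have := st_odd (4 * n + 1)
    rw [show 2 * (4 * n + 1) + 1 = 8 * n + 3 by ring] at this
    have h2 := st_odd (2 * n)
    rw [show 2 * (2 * n) + 1 = 4 * n + 1 by ring, st_even] at h2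
    omega
  have h8 : st (16 * n + 8) % 2 = (st n + 1) % 2 := by
    rw [show 16 * n + 8 = 2 * (2 * (2 * (2 * n + 1))) by ring, st_even, st_even, st_even]
    have := st_odd n
    omega
  have h4 : st (16 * n + 4) % 2 = (st n + 1) % 2 := by
    rw [show 16 * n + 4 = 2 * (2 * (4 * n + 1)) by ring, st_even, st_even]
    have := st_odd (2 * n)
    rw [show 2 * (2 * n) + 1 = 4 * n + 1 by ring, st_even] at this
    omega
  constructor <;> simp only [Nat.ModEq] <;> omega
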